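/- (Spectral Minimax Theorem) Let n ≥ 1 and m ≥ 1, and let A₁, …, A_m be n × n real symmetric matrices. Then min over X in the spectraplex Δ_n of (max over y in the simplex S_m of ∑_{i=1}^m y_i (A_i • X)) equals max over y in S_m of (min over X in Δ_n of ∑_{i=1}^m y_i (A_i • X)); both the outer minimum/maximum and inner maximum/minimum are attained. -/

import Mathlib

open Matrix BigOperators

/-- The spectraplex: symmetric positive semidefinite `n × n` real matrices of trace one. -/
def spectraplex (n : ℕ) : Set (Matrix (Fin n) (Fin n) ℝ) :=
  {X | X.IsSymm ∧ X.PosSemidef ∧ X.trace = 1}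

/-- The unit simplex in `ℝ^m`. -/
def unitSimplex (m : ℕ) : Set (Fin m → ℝ) :=
  {y | (∑ i, y i) = 1 ∧ ∀ i, 0 ≤ y i}

/-!
The payoff `(X, y) ↦ ∑ yᵢ (Aᵢ • X)` is bilinear, and `Δₙ`, `Sₘ` are nonempty compact convex
sets in finite-dimensional spaces, so Sion's minimax theorem provides a saddle point `(X₀, y₀)`;
its value is at once the min-max and the max-min. Compactness of `Δₙ` comes from the `2 × 2`
principal minors: `Xᵢⱼ² ≤ Xᵢᵢ Xⱼⱼ ≤ 1`.
-/

theorem LinearMap.exists_isSaddlePointOn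
    {E F : Type*} [AddCommGroup E] [Module ℝ E] [TopologicalSpace E] [IsTopologicalAddGroup E]
    [ContinuousSMul ℝ E] [T2Space E] [FiniteDimensional ℝ E]
    [AddCommGroup F] [Module ℝ F] [TopologicalSpace F] [IsTopologicalAddGroup F]
    [ContinuousSMul ℝ F] [T2Space F] [FiniteDimensional ℝ F]
    (B : E →ₗ[ℝ] F →ₗ[ℝ] ℝ) {X : Set E} {Y : Set F}
    (hX : X.Nonempty) (cX : Convex ℝ X) (kX : IsCompact X)
    (hY : Y.Nonempty) (cY : Convex ℝ Y) (kY : IsCompact Y) :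
    ∃ a ∈ X, ∃ b ∈ Y, IsSaddlePointOn X Y (fun x y => B x y) a b :=
  Sion.exists_isSaddlePointOn hX cX kX
    (fun y _ =>
      (B.flip y).continuous_of_finiteDimensional.lowerSemicontinuous.lowerSemicontinuousOn _)
    (fun y _ => ((B.flip y).convexOn cX).quasiconvexOn) cY hY kY
    (fun x _ =>
      (B x).continuous_of_finiteDimensional.upperSemicontinuous.upperSemicontinuousOn _)
    (fun x _ => ((B x).concaveOn cY).quasiconcaveOn)

namespace IsSaddlePointOn

variable {E F β : Type*} [Preorder β] {X : Set E} {Y : Set F} {f : E → F → β} {a : E} {b : F}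

theorem isLeast_setOf_isGreatest_image (h : IsSaddlePointOn X Y f a b) (ha : a ∈ X) (hb : b ∈ Y) :
    IsLeast {r | ∃ x ∈ X, IsGreatest (f x '' Y) r} (f a b) :=
  ⟨⟨a, ha, ⟨b, hb, rfl⟩, by rintro _ ⟨y, hy, rfl⟩; exact h a ha y hy⟩,
    by rintro r ⟨x, hx, -, hr⟩; exact (h x hx b hb).trans (hr ⟨b, hb, rfl⟩)⟩

theorem isGreatest_setOf_isLeast_image (h : IsSaddlePointOn X Y f a b) (ha : a ∈ X) (hb : b ∈ Y) :
    IsGreatest {r | ∃ y ∈ Y, IsLeast ((f · y) '' X) r} (f a b) :=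
  ⟨⟨b, hb, ⟨a, ha, rfl⟩, by rintro _ ⟨x, hx, rfl⟩; exact h x hx b hb⟩,
    by rintro r ⟨y, hy, -, hr⟩; exact (hr ⟨a, ha, rfl⟩).trans (h a ha y hy)⟩

end IsSaddlePointOn

theorem Matrix.PosSemidef.apply_sq_le {ι : Type*} [Fintype ι] {X : Matrix ι ι ℝ}
    (hX : X.PosSemidef) (i j : ι) : X i j ^ 2 ≤ X i i * X j j := by
  have hdet := (hX.submatrix ![i, j]).det_nonneg
  have hsymm : X j i = X i j := hX.isHermitian.apply i j
  simp only [det_fin_two, submatrix_apply, cons_val_zero, cons_val_one, hsymm] at hdet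
  linarith [sq (X i j)]

theorem Matrix.isClosed_setOf_posSemidef {ι : Type*} [Fintype ι] :
    IsClosed {X : Matrix ι ι ℝ | X.PosSemidef} := by
  simp only [posSemidef_iff_dotProduct_mulVec, Set.ofPred_and, Set.ofPred_forall]
  exact (isClosed_eq continuous_id.matrix_conjTranspose continuous_id).inter <|
    isClosed_iInter fun x => isClosed_le continuous_const <|
      continuous_const.dotProduct (continuous_id.matrix_mulVec continuous_const)

theorem spectraplex_nonempty {n : ℕ} (hn : 1 ≤ n) : (spectraplex n).Nonempty := by
  let i : Fin n := ⟨0, hn⟩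
  refine ⟨diagonal (Pi.single i 1), isSymm_diagonal _,
    PosSemidef.diagonal (Pi.single_nonneg.mpr zero_le_one), ?_⟩
  simp [trace_diagonal]

theorem convex_spectraplex {n : ℕ} : Convex ℝ (spectraplex n) := by
  rintro X ⟨hXs, hXp, hXt⟩ Y ⟨hYs, hYp, hYt⟩ a b ha hb hab
  refine ⟨(hXs.smul a).add (hYs.smul b), (hXp.smul ha).add (hYp.smul hb), ?_⟩
  simp [trace_add, trace_smul, hXt, hYt, hab]

theorem abs_apply_le_one_of_mem_spectraplex {n : ℕ} {X : Matrix (Fin n) (Fin n) ℝ}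
    (hX : X ∈ spectraplex n) (i j : Fin n) : |X i j| ≤ 1 := by
  obtain ⟨-, hpsd, htr⟩ := hX
  have hdiag (k : Fin n) : X k k ≤ 1 :=
    htr ▸ Finset.single_le_sum (f := fun k => X k k) (fun k _ => hpsd.diag_nonneg)
      (Finset.mem_univ k)
  refine (sq_le_one_iff_abs_le_one _).mp <| (hpsd.apply_sq_le i j).trans ?_
  nlinarith [hpsd.diag_nonneg (i := i), hpsd.diag_nonneg (i := j), hdiag i, hdiag j]

theorem isClosed_spectraplex {n : ℕ} : IsClosed (spectraplex n) :=
  (isClosed_eq continuous_id.matrix_transpose continuous_id).inter <|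
    isClosed_setOf_posSemidef.inter <| isClosed_eq continuous_id.matrix_trace continuous_const

theorem isCompact_spectraplex {n : ℕ} : IsCompact (spectraplex n) := by
  refine (isCompact_univ_pi fun _ => isCompact_univ_pi fun _ =>
    isCompact_Icc (a := (-1 : ℝ)) (b := 1)).of_isClosed_subset
    isClosed_spectraplex fun X hX => ?_
  simp only [Set.mem_univ_pi]
  exact fun i j => abs_le.mp (abs_apply_le_one_of_mem_spectraplex hX i j)

theorem unitSimplex_eq_stdSimplex (m : ℕ) : unitSimplex m = stdSimplex ℝ (Fin m) := by
  ext y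
  exact and_comm

theorem Set.setOf_exists_mem_eq_eq_image {α β : Type*} (f : α → β) (s : Set α) :
    {b | ∃ a ∈ s, b = f a} = f '' s :=
  Set.ext fun _ => exists_congr fun _ => and_congr_right' eq_comm

def payoffBilin {R ι κ : Type*} [CommSemiring R] [Fintype ι] [Fintype κ]
    (A : κ → Matrix ι ι R) : Matrix ι ι R →ₗ[R] (κ → R) →ₗ[R] R :=
  LinearMap.mk₂ R (fun X y => ∑ k, y k * (A k * X).trace)
    (by simp [mul_add, Finset.sum_add_distrib])
    (by simp [Finset.mul_sum, mul_left_comm])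
    (by simp [add_mul, Finset.sum_add_distrib])
    (by simp [Finset.mul_sum, mul_assoc])

theorem spectral_minimax_general {n m : ℕ} (hn : 1 ≤ n) (hm : 1 ≤ m)
    (A : Fin m → Matrix (Fin n) (Fin n) ℝ) :
    (∀ X ∈ spectraplex n, ∃ g : ℝ,
      IsGreatest {s : ℝ | ∃ y ∈ unitSimplex m, s = ∑ i, y i * (A i * X).trace} g) ∧
    (∀ y ∈ unitSimplex m, ∃ l : ℝ,
      IsLeast {s : ℝ | ∃ X ∈ spectraplex n, s = ∑ i, y i * (A i * X).trace} l) ∧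
    ∃ v : ℝ,
      IsLeast {r : ℝ | ∃ X ∈ spectraplex n,
        IsGreatest {s : ℝ | ∃ y ∈ unitSimplex m, s = ∑ i, y i * (A i * X).trace} r} v ∧
      IsGreatest {r : ℝ | ∃ y ∈ unitSimplex m,
        IsLeast {s : ℝ | ∃ X ∈ spectraplex n, s = ∑ i, y i * (A i * X).trace} r} v := by
  let B := payoffBilin A
  have hX := spectraplex_nonempty hn
  have hY : (stdSimplex ℝ (Fin m)).Nonempty := ⟨_, single_mem_stdSimplex ℝ ⟨0, hm⟩⟩
  obtain ⟨X₀, hX₀, y₀, hy₀, hsaddle⟩ := B.exists_isSaddlePointOn hX convex_spectraplex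
    isCompact_spectraplex hY (convex_stdSimplex ℝ _) (isCompact_stdSimplex ℝ (Fin m))
  simp only [unitSimplex_eq_stdSimplex, Set.setOf_exists_mem_eq_eq_image]
  refine ⟨fun X _ => ?_, fun y _ => ?_, B X₀ y₀, hsaddle.isLeast_setOf_isGreatest_image hX₀ hy₀,
    hsaddle.isGreatest_setOf_isLeast_image hX₀ hy₀⟩
  · exact ((isCompact_stdSimplex ℝ (Fin m)).image
      (B X).continuous_of_finiteDimensional).exists_isGreatest (hY.image _)
  · exact (isCompact_spectraplex.image (B.flip y).continuous_of_finiteDimensional).exists_isLeast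
      (hX.image _)

/-- **Spectral Minimax Theorem.** Given real symmetric matrices `A 1, …, A m`,
`min_{X ∈ Δₙ} max_{y ∈ Sₘ} ∑ yᵢ (Aᵢ • X) = max_{y ∈ Sₘ} min_{X ∈ Δₙ} ∑ yᵢ (Aᵢ • X)`,
with all inner and outer extrema attained. -/
theorem spectral_minimax {n m : ℕ} (hn : 1 ≤ n) (hm : 1 ≤ m)
    (A : Fin m → Matrix (Fin n) (Fin n) ℝ) (hA : ∀ i, (A i).IsSymm) :
    (∀ X ∈ spectraplex n, ∃ g : ℝ,
      IsGreatest {s : ℝ | ∃ y ∈ unitSimplex m, s = ∑ i, y i * (A i * X).trace} g) ∧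
    (∀ y ∈ unitSimplex m, ∃ l : ℝ,
      IsLeast {s : ℝ | ∃ X ∈ spectraplex n, s = ∑ i, y i * (A i * X).trace} l) ∧
    ∃ v : ℝ,
      IsLeast {r : ℝ | ∃ X ∈ spectraplex n,
        IsGreatest {s : ℝ | ∃ y ∈ unitSimplex m, s = ∑ i, y i * (A i * X).trace} r} v ∧
      IsGreatest {r : ℝ | ∃ y ∈ unitSimplex m,
        IsLeast {s : ℝ | ∃ X ∈ spectraplex n, s = ∑ i, y i * (A i * X).trace} r} v :=
  spectral_minimax_general hn hm A
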